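/- arXiv:2604.07310 — 2 statements merged into one kernel-verified Lean document; each statement's English description precedes it below -/
import Mathlib

section
/- Let Z_UU, Z_ΩΩ ∈ ℝ^{3×3} be symmetric with Z_UU positive definite, Z_UΩ ∈ ℝ^{3×3} arbitrary, and fix a nonzero W ∈ ℝ³. Define P(s, V) := Vᵀ Z_UU V + 2 Vᵀ (s Z_UΩ + Z_UU) W + Wᵀ (s² Z_ΩΩ + 2s Z_UΩ + Z_UU) W. Assume the full matrix [[Z_UU, Z_UΩ],[Z_UΩᵀ, Z_ΩΩ]] is positive definite. Set A_UU := Wᵀ Z_UU⁻¹ W, A_UΩ := Wᵀ Z_UU⁻¹ Z_UΩ W, A_ΩΩ := Wᵀ (Z_ΩΩ − Z_UΩᵀ Z_UU⁻¹ Z_UΩ) W, and D := A_UU A_ΩΩ + A_UΩ². Then the minimizer of P(s, V) over all s ∈ ℝ and V ∈ ℝ³ with Vᵀ W = 0 is given by s* = −|W|² A_UΩ / D and V* = (|W|² A_ΩΩ D⁻¹ Z_UU⁻¹ − s* Z_UU⁻¹ Z_UΩ − I) W, and the minimum value is P(s*, V*) = |W|⁴ A_ΩΩ / D. -/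
/-!
For fixed `s`, the constraint `Vᵀ W = 0` is absorbed by a Lagrange multiplier, i.e. by
replacing the linear coefficient `b` by `b - μ W`; completing the square in `Z_UU` then gives

  `P(s, V) = (V - V_s)ᵀ Z_UU (V - V_s) + A_ΩΩ s² + (s A_UΩ + |W|²)² / A_UU`

for `V ⊥ W`, where `V_s ⊥ W` is the constrained minimizer. The `s`-dependent part is a
parabola with leading coefficient `D / A_UU`, whose vertex is `s*`. Positivity of `A_UU` and
`A_ΩΩ` comes from positive definiteness of `Z_UU` and of its Schur complement
`Z_ΩΩ - Z_UΩᵀ Z_UU⁻¹ Z_UΩ`.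
-/

open Matrix

namespace Matrix.PosDef

theorem of_fromBlocks₁₁ {m n R : Type*} [Ring R] [PartialOrder R] [StarRing R]
    {A : Matrix m m R} {B : Matrix m n R} {C : Matrix n m R} {D : Matrix n n R}
    (h : (fromBlocks A B C D).PosDef) : A.PosDef :=
  h.submatrix Sum.inl_injective

theorem schur_complement₁₁ {m n R : Type*} [Fintype m] [Fintype n] [DecidableEq m] [CommRing R]
    [PartialOrder R] [StarRing R] {A : Matrix m m R} [Invertible A] {B : Matrix m n R}
    {D : Matrix n n R} (h : (fromBlocks A B Bᴴ D).PosDef) : (D - Bᴴ * A⁻¹ * B).PosDef := by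
  have hA : A.IsHermitian := h.of_fromBlocks₁₁.isHermitian
  refine of_dotProduct_mulVec_pos ((IsHermitian.fromBlocks₁₁ B D hA).mp h.isHermitian)
    fun y hy => ?_
  have hne : (-((A⁻¹ * B) *ᵥ y) ⊕ᵥ y) ≠ 0 := fun h0 => hy (funext fun i => congrFun h0 (Sum.inr i))
  have := h.dotProduct_mulVec_pos hne
  rwa [dotProduct_mulVec, schur_complement_eq₁₁ B D _ _ hA, neg_add_cancel, star_zero,
    zero_vecMul, zero_dotProduct, zero_add, ← dotProduct_mulVec] at this

theorem dotProduct_schur_complement₁₁_mulVec_pos {m n : Type*} [Fintype m] [Fintype n]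
    [DecidableEq m] {A : Matrix m m ℝ} {B : Matrix m n ℝ} {D : Matrix n n ℝ}
    (h : (fromBlocks A B Bᵀ D).PosDef) {y : n → ℝ} (hy : y ≠ 0) :
    0 < y ⬝ᵥ ((D - Bᵀ * A⁻¹ * B) *ᵥ y) := by
  have := h.of_fromBlocks₁₁.isUnit.invertible
  rw [← conjTranspose_eq_transpose_of_trivial] at h ⊢
  simpa using h.schur_complement₁₁.dotProduct_mulVec_pos hy

end Matrix.PosDef

section ConstrainedQuadratic

variable {K n : Type*} [Field K] [Fintype n] [DecidableEq n] {M : Matrix n n K}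

omit [DecidableEq n] in
theorem Matrix.IsSymm.dotProduct_mulVec_comm (hM : M.IsSymm) (x y : n → K) :
    x ⬝ᵥ (M *ᵥ y) = y ⬝ᵥ (M *ᵥ x) := by
  rw [dotProduct_comm, dotProduct_mulVec, ← mulVec_transpose, hM.eq]

/-- The minimizer of `V ↦ Vᵀ M V + 2 Vᵀ b` on the hyperplane `Vᵀ W = 0`; the coefficient of `W`
is the Lagrange multiplier of the constraint. -/
noncomputable def constrainedMinimizer (M : Matrix n n K) (W b : n → K) : n → K :=
  -(M⁻¹ *ᵥ (b - (W ⬝ᵥ (M⁻¹ *ᵥ b) / W ⬝ᵥ (M⁻¹ *ᵥ W)) • W))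

theorem constrainedMinimizer_dotProduct {W : n → K} (hW : W ⬝ᵥ (M⁻¹ *ᵥ W) ≠ 0) (b : n → K) :
    constrainedMinimizer M W b ⬝ᵥ W = 0 := by
  rw [constrainedMinimizer, neg_dotProduct, dotProduct_comm, mulVec_sub, mulVec_smul,
    dotProduct_sub, dotProduct_smul, smul_eq_mul, div_mul_cancel₀ _ hW, sub_self, neg_zero]

theorem dotProduct_mulVec_add_two_mul_eq_of_dotProduct_eq_zero (hM : M.IsSymm)
    (hdet : IsUnit M.det) {V W : n → K} (hV : V ⬝ᵥ W = 0) (b : n → K) :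
    V ⬝ᵥ (M *ᵥ V) + 2 * (V ⬝ᵥ b)
      = (V - constrainedMinimizer M W b) ⬝ᵥ (M *ᵥ (V - constrainedMinimizer M W b))
        - b ⬝ᵥ (M⁻¹ *ᵥ b) + (W ⬝ᵥ (M⁻¹ *ᵥ b)) ^ 2 / W ⬝ᵥ (M⁻¹ *ᵥ W) := by
  set a := W ⬝ᵥ (M⁻¹ *ᵥ W)
  set μ := W ⬝ᵥ (M⁻¹ *ᵥ b) / a
  set c := b - μ • W
  have hMc : M *ᵥ (M⁻¹ *ᵥ c) = c := by rw [mulVec_mulVec, mul_nonsing_inv _ hdet, one_mulVec]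
  have hVc : V ⬝ᵥ b = V ⬝ᵥ c := by
    rw [dotProduct_sub, dotProduct_smul, hV, smul_zero, sub_zero]
  have hc : c ⬝ᵥ (M⁻¹ *ᵥ c) = b ⬝ᵥ (M⁻¹ *ᵥ b) - (W ⬝ᵥ (M⁻¹ *ᵥ b)) ^ 2 / a := by
    rw [mulVec_sub, mulVec_smul]
    simp only [c, dotProduct_sub, sub_dotProduct, dotProduct_smul, smul_dotProduct, smul_eq_mul,
      hM.inv.dotProduct_mulVec_comm b W]
    rcases eq_or_ne a 0 with ha | ha
    · simp [μ, ha]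
    · simp only [μ]; field_simp; ring
  have hmin : constrainedMinimizer M W b = -(M⁻¹ *ᵥ c) := rfl
  rw [hmin, sub_neg_eq_add, mulVec_add, hMc, dotProduct_add, add_dotProduct, add_dotProduct,
    hM.dotProduct_mulVec_comm (M⁻¹ *ᵥ c) V, hMc, ← hVc, dotProduct_comm _ c, hc]
  ring

theorem dotProduct_inv_mulVec_smul_add_mulVec (hdet : IsUnit M.det) (C : Matrix n n K)
    (W : n → K) (s : K) :
    W ⬝ᵥ (M⁻¹ *ᵥ ((s • C + M) *ᵥ W)) = s * (W ⬝ᵥ ((M⁻¹ * C) *ᵥ W)) + W ⬝ᵥ W := by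
  rw [mulVec_mulVec, Matrix.mul_add, Matrix.mul_smul, nonsing_inv_mul _ hdet, add_mulVec,
    smul_mulVec, one_mulVec, dotProduct_add, dotProduct_smul, smul_eq_mul]

theorem dotProduct_mulVec_sub_dotProduct_inv_mulVec_eq_sq_mul_schur (hM : M.IsSymm)
    (hdet : IsUnit M.det) (C E : Matrix n n K) (W : n → K) (s : K) :
    W ⬝ᵥ ((s ^ 2 • E + (2 * s) • C + M) *ᵥ W)
        - ((s • C + M) *ᵥ W) ⬝ᵥ (M⁻¹ *ᵥ ((s • C + M) *ᵥ W))
      = s ^ 2 * (W ⬝ᵥ ((E - Cᵀ * M⁻¹ * C) *ᵥ W)) := by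
  have hMW : M⁻¹ *ᵥ (M *ᵥ W) = W := by rw [mulVec_mulVec, nonsing_inv_mul _ hdet, one_mulVec]
  have hCC : (C *ᵥ W) ⬝ᵥ (M⁻¹ *ᵥ (C *ᵥ W)) = W ⬝ᵥ ((Cᵀ * M⁻¹ * C) *ᵥ W) := by
    rw [← mulVec_mulVec, ← mulVec_mulVec, dotProduct_mulVec W, vecMul_transpose]
  simp only [add_mulVec, smul_mulVec, mulVec_add, mulVec_smul, sub_mulVec,
    dotProduct_add, add_dotProduct, dotProduct_smul, smul_dotProduct, smul_eq_mul, dotProduct_sub,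
    hMW, hCC, hM.inv.dotProduct_mulVec_comm (M *ᵥ W), dotProduct_comm (C *ᵥ W) W,
    dotProduct_comm (M *ᵥ W) W]
  ring

theorem constrainedMinimizer_smul_add_mulVec (hdet : IsUnit M.det) (C : Matrix n n K)
    (W : n → K) (s : K) :
    constrainedMinimizer M W ((s • C + M) *ᵥ W)
      = (((s * (W ⬝ᵥ ((M⁻¹ * C) *ᵥ W)) + W ⬝ᵥ W) / W ⬝ᵥ (M⁻¹ *ᵥ W)) • M⁻¹
          - s • (M⁻¹ * C) - 1) *ᵥ W := by
  rw [constrainedMinimizer, dotProduct_inv_mulVec_smul_add_mulVec hdet, mulVec_sub, mulVec_mulVec,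
    Matrix.mul_add, Matrix.mul_smul, nonsing_inv_mul _ hdet, mulVec_smul]
  simp only [sub_mulVec, add_mulVec, smul_mulVec, one_mulVec]
  module

end ConstrainedQuadratic

theorem mul_sq_add_sq_div_eq_vertex_form {K : Type*} [Field K] {a c e w D : K} (ha : a ≠ 0)
    (hD : D = a * c + e ^ 2) (hD0 : D ≠ 0) (s : K) :
    c * s ^ 2 + (s * e + w) ^ 2 / a = D / a * (s - -w * e / D) ^ 2 + w ^ 2 * c / D := by
  field_simp
  rw [hD]
  ring

theorem stmt_5_general
    (ZUU ZUO ZOO : Matrix (Fin 3) (Fin 3) ℝ)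
    (hUU : ZUU.IsSymm)
    (hZ : (Matrix.fromBlocks ZUU ZUO ZUOᵀ ZOO).PosDef)
    (W : Fin 3 → ℝ) (hW : W ≠ 0)
    (P : ℝ → (Fin 3 → ℝ) → ℝ)
    (hP : ∀ (s : ℝ) (V : Fin 3 → ℝ),
      P s V = V ⬝ᵥ (ZUU *ᵥ V) + 2 * (V ⬝ᵥ ((s • ZUO + ZUU) *ᵥ W))
        + W ⬝ᵥ (((s ^ 2) • ZOO + (2 * s) • ZUO + ZUU) *ᵥ W))
    (AUU AUO AOO D : ℝ)
    (hAUU : AUU = W ⬝ᵥ (ZUU⁻¹ *ᵥ W))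
    (hAUO : AUO = W ⬝ᵥ ((ZUU⁻¹ * ZUO) *ᵥ W))
    (hAOO : AOO = W ⬝ᵥ ((ZOO - ZUOᵀ * ZUU⁻¹ * ZUO) *ᵥ W))
    (hD : D = AUU * AOO + AUO ^ 2)
    (sstar : ℝ) (Vstar : Fin 3 → ℝ)
    (hs : sstar = -(W ⬝ᵥ W) * AUO / D)
    (hV : Vstar = (((W ⬝ᵥ W) * AOO / D) • ZUU⁻¹
        - sstar • (ZUU⁻¹ * ZUO) - 1) *ᵥ W) :
    Vstar ⬝ᵥ W = 0 ∧
    (∀ (s : ℝ) (V : Fin 3 → ℝ), V ⬝ᵥ W = 0 → P sstar Vstar ≤ P s V) ∧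
    P sstar Vstar = (W ⬝ᵥ W) ^ 2 * AOO / D := by
  have hM : ZUU.PosDef := hZ.of_fromBlocks₁₁
  have hdet : IsUnit ZUU.det := (isUnit_iff_isUnit_det _).mp hM.isUnit
  have hAUU_pos : 0 < AUU := by simpa [hAUU] using hM.inv.dotProduct_mulVec_pos hW
  have hAOO_pos : 0 < AOO := hAOO ▸ hZ.dotProduct_schur_complement₁₁_mulVec_pos hW
  have hD_pos : 0 < D := hD ▸ add_pos_of_pos_of_nonneg (mul_pos hAUU_pos hAOO_pos) (sq_nonneg _)
  set Vmin := fun s : ℝ => constrainedMinimizer ZUU W ((s • ZUO + ZUU) *ᵥ W)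
  have key : ∀ s V, V ⬝ᵥ W = 0 → P s V = (V - Vmin s) ⬝ᵥ (ZUU *ᵥ (V - Vmin s))
      + D / AUU * (s - sstar) ^ 2 + (W ⬝ᵥ W) ^ 2 * AOO / D := by
    intro s V hVW
    rw [hP, dotProduct_mulVec_add_two_mul_eq_of_dotProduct_eq_zero hUU hdet hVW,
      dotProduct_inv_mulVec_smul_add_mulVec hdet, ← hAUU, ← hAUO, hs]
    linear_combination
      dotProduct_mulVec_sub_dotProduct_inv_mulVec_eq_sq_mul_schur hUU hdet ZUO ZOO W s
        - s ^ 2 * hAOO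
        + mul_sq_add_sq_div_eq_vertex_form (w := W ⬝ᵥ W) hAUU_pos.ne' hD hD_pos.ne' s
  have hμ : (sstar * AUO + W ⬝ᵥ W) / AUU = W ⬝ᵥ W * AOO / D := by
    rw [hs, hD]; field_simp; ring
  have hVstar : Vstar = Vmin sstar := by
    rw [hV, ← hμ, hAUU, hAUO, ← constrainedMinimizer_smul_add_mulVec hdet]
  have hVW : Vstar ⬝ᵥ W = 0 := hVstar ▸ constrainedMinimizer_dotProduct (hAUU ▸ hAUU_pos.ne') _
  have hmin : P sstar Vstar = (W ⬝ᵥ W) ^ 2 * AOO / D := by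
    rw [key _ _ hVW, hVstar, sub_self]; simp
  refine ⟨hVW, fun s V hV0 => ?_, hmin⟩
  have hquad := hM.posSemidef.dotProduct_mulVec_nonneg (V - Vmin s)
  have hpar : 0 ≤ D / AUU * (s - sstar) ^ 2 := by positivity
  rw [star_trivial] at hquad
  linarith [key s V hV0]

theorem stmt_5
    (ZUU ZUO ZOO : Matrix (Fin 3) (Fin 3) ℝ)
    (hUU : ZUU.IsSymm) (hOO : ZOO.IsSymm)
    (hZ : (Matrix.fromBlocks ZUU ZUO ZUOᵀ ZOO).PosDef)
    (W : Fin 3 → ℝ) (hW : W ≠ 0)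
    (P : ℝ → (Fin 3 → ℝ) → ℝ)
    (hP : ∀ (s : ℝ) (V : Fin 3 → ℝ),
      P s V = V ⬝ᵥ (ZUU *ᵥ V) + 2 * (V ⬝ᵥ ((s • ZUO + ZUU) *ᵥ W))
        + W ⬝ᵥ (((s ^ 2) • ZOO + (2 * s) • ZUO + ZUU) *ᵥ W))
    (AUU AUO AOO D : ℝ)
    (hAUU : AUU = W ⬝ᵥ (ZUU⁻¹ *ᵥ W))
    (hAUO : AUO = W ⬝ᵥ ((ZUU⁻¹ * ZUO) *ᵥ W))
    (hAOO : AOO = W ⬝ᵥ ((ZOO - ZUOᵀ * ZUU⁻¹ * ZUO) *ᵥ W))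
    (hD : D = AUU * AOO + AUO ^ 2)
    (sstar : ℝ) (Vstar : Fin 3 → ℝ)
    (hs : sstar = -(W ⬝ᵥ W) * AUO / D)
    (hV : Vstar = (((W ⬝ᵥ W) * AOO / D) • ZUU⁻¹
        - sstar • (ZUU⁻¹ * ZUO) - 1) *ᵥ W) :
    Vstar ⬝ᵥ W = 0 ∧
    (∀ (s : ℝ) (V : Fin 3 → ℝ), V ⬝ᵥ W = 0 → P sstar Vstar ≤ P s V) ∧
    P sstar Vstar = (W ⬝ᵥ W) ^ 2 * AOO / D :=
  stmt_5_general ZUU ZUO ZOO hUU hZ W hW P hP AUU AUO AOO D hAUU hAUO hAOO hD sstar Vstar hs hV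
end

section
/- Let Z be a symmetric positive definite 6×6 matrix with blocks Z_UU, Z_UΩ, Z_ΩΩ as above and W a unit vector. Then B_UU − B_UΩ²/B_ΩΩ ≥ |W|⁴ A_ΩΩ / D, i.e. the minimum power loss over spinning straight motions (V = 0) is at least the minimum over all helical motions with the same net direction W. -/
/-!
Completing the square in the spin block (a Schur complement) writes the power of the motion
`(U, Ω) = (W, s W)` as `y ⬝ Z_UU y + s² A_ΩΩ` with `y = W + s Z_UU⁻¹ Z_UΩ W`. Cauchy–Schwarz in the
`Z_UU`-inner product bounds the first term below by `(|W|² + s A_UΩ)² / A_UU`, and a one-variable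
Cauchy–Schwarz bounds the sum below by `|W|⁴ A_ΩΩ / D`, whatever `s` is. Taking the optimal spin
`s = -B_UΩ / B_ΩΩ` gives the claim.
-/

open Matrix

namespace Matrix

variable {m n : Type*} [Fintype m] [Fintype n]

theorem PosSemidef.dotProduct_mulVec_mul_le [DecidableEq n] {A : Matrix n n ℝ} (hA : A.PosSemidef)
    (x y : n → ℝ) :
    (x ⬝ᵥ A *ᵥ y) * (y ⬝ᵥ A *ᵥ x) ≤ (x ⬝ᵥ A *ᵥ x) * (y ⬝ᵥ A *ᵥ y) := by
  simpa only [toLinearMap₂'_apply'] using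
    LinearMap.BilinForm.apply_mul_apply_le_of_forall_zero_le (toLinearMap₂' ℝ A)
      (fun v ↦ by
        simpa only [toLinearMap₂'_apply', star_trivial] using hA.dotProduct_mulVec_nonneg v) x y

theorem PosDef.dotProduct_sq_le [DecidableEq n] {A : Matrix n n ℝ} (hA : A.PosDef) (w y : n → ℝ) :
    (w ⬝ᵥ y) ^ 2 ≤ (w ⬝ᵥ A⁻¹ *ᵥ w) * (y ⬝ᵥ A *ᵥ y) := by
  have hAinv : A *ᵥ (A⁻¹ *ᵥ w) = w := by
    rw [mulVec_mulVec, mul_nonsing_inv _ ((isUnit_iff_isUnit_det A).mp hA.isUnit), one_mulVec]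
  have hsymm : ∀ x z : n → ℝ, x ⬝ᵥ A *ᵥ z = z ⬝ᵥ A *ᵥ x := fun x z ↦ by
    rw [dotProduct_mulVec, ← mulVec_transpose, ← conjTranspose_eq_transpose_of_trivial,
      hA.isHermitian.eq, dotProduct_comm]
  have := hA.posSemidef.dotProduct_mulVec_mul_le (A⁻¹ *ᵥ w) y
  rwa [hsymm _ y, hAinv, ← sq, dotProduct_comm y, dotProduct_comm _ w] at this

theorem dotProduct_mulVec_fromBlocks (A : Matrix m m ℝ) (B : Matrix m n ℝ) (C : Matrix n n ℝ)
    (x : m → ℝ) (z : n → ℝ) :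
    (x ⊕ᵥ z) ⬝ᵥ fromBlocks A B Bᵀ C *ᵥ (x ⊕ᵥ z) =
      x ⬝ᵥ A *ᵥ x + 2 * (x ⬝ᵥ B *ᵥ z) + z ⬝ᵥ C *ᵥ z := by
  simp only [fromBlocks_mulVec, dotProduct_block, Sum.elim_comp_inl, Sum.elim_comp_inr,
    dotProduct_add]
  rw [dotProduct_mulVec z, vecMul_transpose, dotProduct_comm (B *ᵥ z)]
  ring

theorem PosDef.dotProduct_sq_div_add_le [DecidableEq m] {A : Matrix m m ℝ} (hA : A.PosDef)
    (B : Matrix m n ℝ) (C : Matrix n n ℝ) (w x : m → ℝ) (z : n → ℝ) :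
    (w ⬝ᵥ (x + (A⁻¹ * B) *ᵥ z)) ^ 2 / (w ⬝ᵥ A⁻¹ *ᵥ w) + z ⬝ᵥ (C - Bᵀ * A⁻¹ * B) *ᵥ z ≤
      x ⬝ᵥ A *ᵥ x + 2 * (x ⬝ᵥ B *ᵥ z) + z ⬝ᵥ C *ᵥ z := by
  have := hA.isUnit.invertible
  have hschur := schur_complement_eq₁₁ B C x z hA.isHermitian
  simp only [conjTranspose_eq_transpose_of_trivial, star_trivial, ← dotProduct_mulVec] at hschur
  rw [← dotProduct_mulVec_fromBlocks, hschur]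
  gcongr
  refine div_le_of_le_mul₀ (hA.inv.posSemidef.dotProduct_mulVec_nonneg w)
    (hA.posSemidef.dotProduct_mulVec_nonneg _) ?_
  rw [mul_comm]
  exact hA.dotProduct_sq_le w _

end Matrix

theorem sq_mul_div_le_sq_div_add_sq_mul {p c : ℝ} (hp : 0 < p) (hc : 0 ≤ c) (w a s : ℝ) :
    w ^ 2 * c / (p * c + a ^ 2) ≤ (w + s * a) ^ 2 / p + s ^ 2 * c := by
  have key : ((w + s * a) ^ 2 + s ^ 2 * c * p) * (p * c + a ^ 2) - w ^ 2 * c * p =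
      (a * (w + s * a) + p * c * s) ^ 2 := by ring
  refine div_le_of_le_mul₀ (by positivity) (by positivity) ?_
  rw [div_add' _ _ _ hp.ne', div_mul_eq_mul_div, le_div_iff₀ hp]
  linarith [key, sq_nonneg (a * (w + s * a) + p * c * s)]

/-- Also true for `a = 0`, where both sides are `c` since `x / 0 = 0`. -/
theorem quadratic_at_neg_div (a b c : ℝ) :
    c + 2 * (-b / a) * b + (-b / a) ^ 2 * a = c - b ^ 2 / a := by
  rcases eq_or_ne a 0 with rfl | ha
  · simp
  · field_simp
    ring

theorem stmt_10_general
    (ZUU ZUO ZOO : Matrix (Fin 3) (Fin 3) ℝ)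
    (hZ : (Matrix.fromBlocks ZUU ZUO ZUOᵀ ZOO).PosDef)
    (W : Fin 3 → ℝ)
    (BUU BUO BOO : ℝ)
    (hBUU : BUU = W ⬝ᵥ (ZUU *ᵥ W))
    (hBUO : BUO = W ⬝ᵥ (ZUO *ᵥ W))
    (hBOO : BOO = W ⬝ᵥ (ZOO *ᵥ W))
    (AUU AUO AOO D : ℝ)
    (hAUU : AUU = W ⬝ᵥ (ZUU⁻¹ *ᵥ W))
    (hAUO : AUO = W ⬝ᵥ ((ZUU⁻¹ * ZUO) *ᵥ W))
    (hAOO : AOO = W ⬝ᵥ ((ZOO - ZUOᵀ * ZUU⁻¹ * ZUO) *ᵥ W))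
    (hD : D = AUU * AOO + AUO ^ 2) :
    (W ⬝ᵥ W) ^ 2 * AOO / D ≤ BUU - BUO ^ 2 / BOO := by
  rcases eq_or_ne W 0 with rfl | hW
  · simp [hBUU, hBUO, hBOO]
  have hA : ZUU.PosDef := hZ.submatrix Sum.inl_injective
  have hS : (ZOO - ZUOᵀ * ZUU⁻¹ * ZUO).PosSemidef := by
    have := hA.isUnit.invertible
    have hZ' : (fromBlocks ZUU ZUO ZUOᴴ ZOO).PosSemidef := by
      simpa only [conjTranspose_eq_transpose_of_trivial] using hZ.posSemidef
    simpa only [conjTranspose_eq_transpose_of_trivial] using (hA.fromBlocks₁₁ ZUO ZOO).mp hZ'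
  have hAUU_pos : 0 < AUU := by simpa [hAUU] using hA.inv.dotProduct_mulVec_pos hW
  have hAOO_nonneg : 0 ≤ AOO := by simpa [hAOO] using hS.dotProduct_mulVec_nonneg W
  set s := -BUO / BOO
  calc (W ⬝ᵥ W) ^ 2 * AOO / D ≤ (W ⬝ᵥ W + s * AUO) ^ 2 / AUU + s ^ 2 * AOO :=
        hD ▸ sq_mul_div_le_sq_div_add_sq_mul hAUU_pos hAOO_nonneg _ _ _
    _ = (W ⬝ᵥ (W + (ZUU⁻¹ * ZUO) *ᵥ (s • W))) ^ 2 / (W ⬝ᵥ ZUU⁻¹ *ᵥ W) +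
          (s • W) ⬝ᵥ (ZOO - ZUOᵀ * ZUU⁻¹ * ZUO) *ᵥ (s • W) := by
        simp only [hAUU, hAUO, hAOO, mulVec_smul, dotProduct_add, dotProduct_smul, smul_dotProduct,
          smul_eq_mul]
        ring
    _ ≤ W ⬝ᵥ ZUU *ᵥ W + 2 * (W ⬝ᵥ ZUO *ᵥ (s • W)) + (s • W) ⬝ᵥ ZOO *ᵥ (s • W) :=
        hA.dotProduct_sq_div_add_le ZUO ZOO W W (s • W)
    _ = BUU + 2 * s * BUO + s ^ 2 * BOO := by
        simp only [hBUU, hBUO, hBOO, mulVec_smul, dotProduct_smul, smul_dotProduct, smul_eq_mul]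
        ring
    _ = BUU - BUO ^ 2 / BOO := quadratic_at_neg_div BOO BUO BUU

theorem stmt_10
    (ZUU ZUO ZOO : Matrix (Fin 3) (Fin 3) ℝ)
    (hZ : (Matrix.fromBlocks ZUU ZUO ZUOᵀ ZOO).PosDef)
    (W : Fin 3 → ℝ) (hW : W ⬝ᵥ W = 1)
    (BUU BUO BOO : ℝ)
    (hBUU : BUU = W ⬝ᵥ (ZUU *ᵥ W))
    (hBUO : BUO = W ⬝ᵥ (ZUO *ᵥ W))
    (hBOO : BOO = W ⬝ᵥ (ZOO *ᵥ W))
    (AUU AUO AOO D : ℝ)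
    (hAUU : AUU = W ⬝ᵥ (ZUU⁻¹ *ᵥ W))
    (hAUO : AUO = W ⬝ᵥ ((ZUU⁻¹ * ZUO) *ᵥ W))
    (hAOO : AOO = W ⬝ᵥ ((ZOO - ZUOᵀ * ZUU⁻¹ * ZUO) *ᵥ W))
    (hD : D = AUU * AOO + AUO ^ 2) :
    (W ⬝ᵥ W) ^ 2 * AOO / D ≤ BUU - BUO ^ 2 / BOO :=
  stmt_10_general ZUU ZUO ZOO hZ W BUU BUO BOO hBUU hBUO hBOO AUU AUO AOO D hAUU hAUO hAOO hD
end
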